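/- arXiv:1710.02744 — 2 statements merged into one kernel-verified Lean document; each statement's English description precedes it below -/
import Mathlib

section
/- In the counting model for sampling without replacement, both K_j = (np − Q(j))/(n − j) and K̃_j = (jp − Q(j))/(n − j), defined for 0 ≤ j ≤ n−1, are martingales with respect to the filtration (F_j)_{0≤j≤n−1}. -/
/-!
Right multiplication by the transposition of two positions `a, b ≥ j` preserves the uniform
measure on permutations and fixes every event of `F_j`, so all undrawn positions have the same
conditional probability of showing `i`. Summing over the `n - j` of them, whose hits add up to
`np - Q(j)`, gives `E[1{C_{j+1} = i} | F_j] = K_j`. Since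
`K_{j+1} = ((n - j) K_j - 1{C_{j+1} = i}) / (n - j - 1)`, this is the martingale property of `K`,
and `K̃_j = K_j - p`.
-/

open MeasureTheory Finset
open scoped ENNReal

/-- The σ-algebra generated by the first `j` draws `C_1, …, C_j`, where
`C_k = d (π k)` for a permutation `π`. -/
noncomputable def sigmaUpTo {n : ℕ} (d : Fin n → ℕ) (j : ℕ) :
    MeasurableSpace (Equiv.Perm (Fin n)) :=
  ⨆ k : Fin n, ⨆ _ : (k : ℕ) < j,
    MeasurableSpace.comap (fun π : Equiv.Perm (Fin n) => d (π k)) ⊤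

open Equiv

lemma ae_eq_condExp_of_forall_setIntegral_eq_of_discrete {Ω : Type*} {m : MeasurableSpace Ω}
    [MeasurableSpace Ω] [DiscreteMeasurableSpace Ω] [Finite Ω] {μ : Measure Ω} [IsFiniteMeasure μ]
    {f g : Ω → ℝ} (hg : Measurable[m] g)
    (h : ∀ s, MeasurableSet[m] s → ∫ x in s, g x ∂μ = ∫ x in s, f x ∂μ) :
    g =ᵐ[μ] μ[f | m] :=
  ae_eq_condExp_of_forall_setIntegral_eq (fun _ _ => .of_discrete) .of_finite
    (fun _ _ _ => Integrable.of_finite.integrableOn) (fun s hs _ => h s hs)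
    hg.stronglyMeasurable.aestronglyMeasurable

namespace SamplingWithoutReplacement

variable {n : ℕ} (d : Fin n → ℕ) (i : ℕ)

/-- The indicator of `C_{k+1} = i`: positions are `0`-based. -/
def hit (k : Fin n) (π : Perm (Fin n)) : ℝ := if d (π k) = i then 1 else 0

def numHits (s : ℕ) (π : Perm (Fin n)) : ℕ := #{k : Fin n | (k : ℕ) < s ∧ d (π k) = i}

/-- `K_s`: the proportion of entries equal to `i` among the `n - s` not yet drawn. -/
noncomputable def remainingRate (s : ℕ) (π : Perm (Fin n)) : ℝ :=
  ((#{l | d l = i} : ℕ) - numHits d i s π) / (n - s)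

lemma numHits_eq_sum_hit (s : ℕ) (π : Perm (Fin n)) :
    (numHits d i s π : ℝ) = ∑ k : Fin n with k.val < s, hit d i k π := by
  simp only [numHits, hit, natCast_card_filter, sum_filter, ite_and]

lemma sum_hit (π : Perm (Fin n)) : ∑ k, hit d i k π = (#{l | d l = i} : ℕ) := by
  rw [natCast_card_filter, ← Equiv.sum_comp π (fun l => if d l = i then (1 : ℝ) else 0)]
  rfl

lemma sum_hit_undrawn (s : ℕ) (π : Perm (Fin n)) :
    ∑ k : Fin n with ¬ k.val < s, hit d i k π = (#{l | d l = i} : ℕ) - numHits d i s π := by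
  rw [← sum_hit, numHits_eq_sum_hit,
    ← sum_filter_add_sum_filter_not univ (fun k : Fin n => (k : ℕ) < s)]
  ring

lemma numHits_succ {j : ℕ} (hj : j < n) (π : Perm (Fin n)) :
    (numHits d i (j + 1) π : ℝ) = numHits d i j π + hit d i ⟨j, hj⟩ π := by
  have : ({k : Fin n | k.val < j + 1} : Finset (Fin n))
      = insert ⟨j, hj⟩ ({k : Fin n | k.val < j} : Finset (Fin n)) := by
    ext k; simp [Fin.ext_iff, Nat.le_iff_lt_or_eq, or_comm]
  rw [numHits_eq_sum_hit, numHits_eq_sum_hit, this, sum_insert (by simp), add_comm]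

lemma remainingRate_succ {j : ℕ} (hj : j + 1 < n) (π : Perm (Fin n)) :
    remainingRate d i (j + 1) π
      = ((n : ℝ) - (j + 1))⁻¹
        * ((n - j) * remainingRate d i j π - hit d i ⟨j, by omega⟩ π) := by
  have hj' : (j : ℝ) + 1 < n := by exact_mod_cast hj
  have h0 : (n : ℝ) - j ≠ 0 := by linarith
  have h1 : (n : ℝ) - (j + 1) ≠ 0 := by linarith
  rw [remainingRate, remainingRate, numHits_succ _ _ (by omega), Nat.cast_add, Nat.cast_one]
  field_simp
  ring

variable {d i}

lemma measurable_hit {j : ℕ} {k : Fin n} (hk : (k : ℕ) < j) :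
    Measurable[sigmaUpTo d j] (hit d i k) := by
  have hdraw : Measurable[sigmaUpTo d j, ⊤] (fun π : Perm (Fin n) => d (π k)) :=
    measurable_iff_comap_le.2 <| le_iSup₂ (f := fun (k : Fin n) (_ : (k : ℕ) < j) =>
      MeasurableSpace.comap (fun π : Perm (Fin n) => d (π k)) ⊤) k hk
  exact (measurable_from_top (f := fun m : ℕ => if m = i then (1 : ℝ) else 0)).comp hdraw

lemma measurable_numHits (j : ℕ) :
    Measurable[sigmaUpTo d j] (fun π => (numHits d i j π : ℝ)) := by
  simp_rw [numHits_eq_sum_hit]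
  exact Finset.measurable_sum _ fun k hk => measurable_hit (mem_filter.1 hk).2

lemma measurable_remainingRate (j : ℕ) :
    Measurable[sigmaUpTo d j] (remainingRate d i j) :=
  ((measurable_numHits j).const_sub _).div_const _

variable [MeasurableSpace (Perm (Fin n))] [DiscreteMeasurableSpace (Perm (Fin n))]

lemma sigmaUpTo_le_invariants {j : ℕ} {a b : Fin n} (ha : j ≤ a) (hb : j ≤ b) :
    sigmaUpTo d j ≤ MeasurableSpace.invariants (· * swap a b) := by
  refine iSup₂_le fun k hk => ?_
  rintro _ ⟨t, -, rfl⟩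
  refine ⟨.of_discrete, ?_⟩
  ext π
  have hka : k ≠ a := fun h => by subst h; omega
  have hkb : k ≠ b := fun h => by subst h; omega
  simp [swap_apply_of_ne_of_ne hka hkb]

variable (μ : Measure (Perm (Fin n)))

lemma setIntegral_hit_eq [μ.IsMulRightInvariant] {j : ℕ} {s : Set (Perm (Fin n))}
    (hs : MeasurableSet[sigmaUpTo d j] s) {a b : Fin n} (ha : j ≤ a) (hb : j ≤ b) :
    ∫ π in s, hit d i a π ∂μ = ∫ π in s, hit d i b π ∂μ := by
  have hinv : (· * swap a b) ⁻¹' s = s := (sigmaUpTo_le_invariants ha hb s hs).2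
  calc ∫ π in s, hit d i a π ∂μ
      = ∫ π in (· * swap a b) ⁻¹' s, hit d i a (π * swap a b) ∂μ :=
        ((measurePreserving_mul_right μ _).setIntegral_preimage_emb
          (MeasurableEquiv.mulRight _).measurableEmbedding _ s).symm
    _ = ∫ π in s, hit d i b π ∂μ := by
        rw [hinv]
        simp [hit, swap_apply_left]

lemma setIntegral_remainingRate [IsFiniteMeasure μ] [μ.IsMulRightInvariant] {j : ℕ} (hj : j < n)
    {s : Set (Perm (Fin n))} (hs : MeasurableSet[sigmaUpTo d j] s) :
    ∫ π in s, remainingRate d i j π ∂μ = ∫ π in s, hit d i ⟨j, hj⟩ π ∂μ := by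
  have hrest : (#{a : Fin n | ¬ a.val < j} : ℝ) = n - j := by
    rw [filter_congr (q := (⟨j, hj⟩ ≤ ·)) (by simp [Fin.le_iff_val_le_val]), filter_le_eq_Ici,
      Fin.card_Ici, Nat.cast_sub hj.le]
  have hpos : (n : ℝ) - j ≠ 0 := sub_ne_zero.2 (by exact_mod_cast hj.ne')
  calc ∫ π in s, remainingRate d i j π ∂μ
      = (∑ a : Fin n with ¬ a.val < j, ∫ π in s, hit d i a π ∂μ) / (n - j) := by
        simp_rw [remainingRate, ← sum_hit_undrawn]
        rw [integral_div, integral_finsetSum _ fun _ _ => Integrable.of_finite]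
    _ = (∑ a : Fin n with ¬ a.val < j, ∫ π in s, hit d i ⟨j, hj⟩ π ∂μ) / (n - j) := by
        congr 1
        refine sum_congr rfl fun a ha => setIntegral_hit_eq μ hs ?_ le_rfl
        simpa using ha
    _ = ∫ π in s, hit d i ⟨j, hj⟩ π ∂μ := by
        rw [sum_const, nsmul_eq_mul, hrest, mul_div_cancel_left₀ _ hpos]

lemma condExp_remainingRate_succ [IsFiniteMeasure μ] [μ.IsMulRightInvariant] {j : ℕ}
    (hj : j + 2 ≤ n) :
    μ[remainingRate d i (j + 1) | sigmaUpTo d j] =ᵐ[μ] remainingRate d i j := by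
  refine (ae_eq_condExp_of_forall_setIntegral_eq_of_discrete (measurable_remainingRate j)
    fun s hs => ?_).symm
  have hj' : (j : ℝ) + 2 ≤ n := by exact_mod_cast hj
  have h1 : (n : ℝ) - (j + 1) ≠ 0 := by linarith
  simp_rw [remainingRate_succ d i (j := j) (by omega)]
  rw [integral_const_mul, integral_sub .of_finite .of_finite, integral_const_mul,
    setIntegral_remainingRate μ (by omega) hs]
  field_simp
  ring

end SamplingWithoutReplacement

open SamplingWithoutReplacement

theorem stmt8_general {n : ℕ} (d : Fin n → ℕ) (i : ℕ)
    [m0 : MeasurableSpace (Equiv.Perm (Fin n))] (hm0 : m0 = ⊤)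
    (μ : Measure (Equiv.Perm (Fin n)))
    (hμ : μ = ((Nat.factorial n : ℝ≥0∞))⁻¹ • Measure.count)
    (p : ℝ) (hp : p = ((Finset.univ.filter (fun j : Fin n => d j = i)).card : ℝ) / n)
    (Q : ℕ → Equiv.Perm (Fin n) → ℕ)
    (hQ : ∀ s π, Q s π =
      (Finset.univ.filter (fun k : Fin n => (k : ℕ) < s ∧ d (π k) = i)).card)
    (K Kt : ℕ → Equiv.Perm (Fin n) → ℝ)
    (hK : ∀ j π, K j π = ((n : ℝ) * p - (Q j π : ℝ)) / ((n : ℝ) - j))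
    (hKt : ∀ j π, Kt j π = ((j : ℝ) * p - (Q j π : ℝ)) / ((n : ℝ) - j)) :
    (∀ j, j + 1 ≤ n → StronglyMeasurable[sigmaUpTo d j] (K j)
        ∧ StronglyMeasurable[sigmaUpTo d j] (Kt j)
        ∧ Integrable (K j) μ ∧ Integrable (Kt j) μ)
      ∧ (∀ j, j + 2 ≤ n → μ[K (j + 1) | sigmaUpTo d j] =ᵐ[μ] K j)
      ∧ (∀ j, j + 2 ≤ n → μ[Kt (j + 1) | sigmaUpTo d j] =ᵐ[μ] Kt j) := by
  have : DiscreteMeasurableSpace (Perm (Fin n)) := by subst hm0; infer_instance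
  have : IsFiniteMeasure μ := hμ ▸ Measure.smul_finite _ (by simp [Nat.factorial_ne_zero])
  have : μ.IsMulRightInvariant := hμ ▸ inferInstance
  have hKR : ∀ j < n, K j = remainingRate d i j := fun j hj => funext fun π => by
    have : (n : ℝ) ≠ 0 := Nat.cast_ne_zero.2 (by omega)
    rw [hK, hQ, hp, mul_div_cancel₀ _ this]
    rfl
  have hKtR : ∀ j < n, Kt j = remainingRate d i j - fun _ => p := fun j hj => funext fun π => by
    have : (n : ℝ) - j ≠ 0 := sub_ne_zero.2 (by exact_mod_cast hj.ne')
    rw [Pi.sub_apply, hKt, ← hKR j hj, hK]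
    field_simp
    ring
  refine ⟨fun j hj => ⟨?_, ?_, .of_finite, .of_finite⟩, fun j hj => ?_, fun j hj => ?_⟩
  · rw [hKR j hj]
    exact (measurable_remainingRate j).stronglyMeasurable
  · rw [hKtR j hj]
    exact ((measurable_remainingRate j).sub_const p).stronglyMeasurable
  · rw [hKR (j + 1) (by omega), hKR j (by omega)]
    exact condExp_remainingRate_succ μ hj
  · rw [hKtR (j + 1) (by omega), hKtR j (by omega)]
    filter_upwards [condExp_sub (m := sigmaUpTo d j) (Integrable.of_finite (μ := μ)
      (f := remainingRate d i (j + 1))) (integrable_const p),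
      condExp_remainingRate_succ μ hj] with π hsub hstep
    rw [hsub, Pi.sub_apply, hstep, condExp_const (fun _ _ => .of_discrete), Pi.sub_apply]

/-- Counting model for sampling without replacement: both
`K_j = (n p - Q(j))/(n - j)` and `K̃_j = (j p - Q(j))/(n - j)`, `0 ≤ j ≤ n - 1`,
are martingales with respect to the filtration `(F_j)_{0 ≤ j ≤ n-1}`: each is
adapted, integrable, and satisfies `E[K_{j+1} | F_j] = K_j` a.s. for `j ≤ n - 2`. -/
theorem stmt8 {n : ℕ} (hn : 1 ≤ n) (d : Fin n → ℕ) (i : ℕ)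
    [m0 : MeasurableSpace (Equiv.Perm (Fin n))] (hm0 : m0 = ⊤)
    (μ : Measure (Equiv.Perm (Fin n)))
    (hμ : μ = ((Nat.factorial n : ℝ≥0∞))⁻¹ • Measure.count)
    (p : ℝ) (hp : p = ((Finset.univ.filter (fun j : Fin n => d j = i)).card : ℝ) / n)
    (Q : ℕ → Equiv.Perm (Fin n) → ℕ)
    (hQ : ∀ s π, Q s π =
      (Finset.univ.filter (fun k : Fin n => (k : ℕ) < s ∧ d (π k) = i)).card)
    (K Kt : ℕ → Equiv.Perm (Fin n) → ℝ)
    (hK : ∀ j π, K j π = ((n : ℝ) * p - (Q j π : ℝ)) / ((n : ℝ) - j))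
    (hKt : ∀ j π, Kt j π = ((j : ℝ) * p - (Q j π : ℝ)) / ((n : ℝ) - j)) :
    (∀ j, j + 1 ≤ n → StronglyMeasurable[sigmaUpTo d j] (K j)
        ∧ StronglyMeasurable[sigmaUpTo d j] (Kt j)
        ∧ Integrable (K j) μ ∧ Integrable (Kt j) μ)
      ∧ (∀ j, j + 2 ≤ n → μ[K (j + 1) | sigmaUpTo d j] =ᵐ[μ] K j)
      ∧ (∀ j, j + 2 ≤ n → μ[Kt (j + 1) | sigmaUpTo d j] =ᵐ[μ] Kt j) :=
  stmt8_general d i (m0 := m0) hm0 μ hμ p hp Q hQ K Kt hK hKt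
end

section
/- In the counting model for sampling without replacement, for every 0 ≤ j ≤ n−2 one has, almost surely, var(K̃_{j+1} | F_j) := E[(K̃_{j+1} − K̃_j)² | F_j] ≤ 1/(4(n−(j+1))²), where K̃_j = (jp − Q(j))/(n − j). -/
/-!
With `m = n - j` items left, `R` of which equal `i`, and `X` the indicator that draw `j + 1`
is `i`, one has `K̃_{j+1} - K̃_j = (R - m X) / (m (m - 1))` since `n p = Q(j) + R`.
Given the first `j` draws, the next item is uniform among the `m` remaining ones (swap it
with any later position), so `X` is Bernoulli(`R / m`) and, as `X² = X`,
`E[(R - m X)² | F_j] = R (m - R) ≤ m² / 4`.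
-/

open MeasureTheory Finset
open scoped ENNReal

open Equiv

theorem mul_sub_div_sq_le (m r : ℝ) :
    r * (m - r) / (m * (m - 1)) ^ 2 ≤ 1 / (4 * (m - 1) ^ 2) := by
  rcases eq_or_ne (m * (m - 1)) 0 with h | h
  · rw [h, zero_pow two_ne_zero, div_zero]; positivity
  obtain ⟨hm, hm₁⟩ := mul_ne_zero_iff.1 h
  calc r * (m - r) / (m * (m - 1)) ^ 2 ≤ m ^ 2 / 4 / (m * (m - 1)) ^ 2 :=
        div_le_div_of_nonneg_right (by nlinarith [sq_nonneg (m - 2 * r)]) (sq_nonneg _)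
    _ = 1 / (4 * (m - 1) ^ 2) := by field_simp

theorem mul_swap_apply_of_lt {α : Type*} [LinearOrder α] {a b c k : α} (hb : a ≤ b)
    (hc : a ≤ c) (hk : k < a) (π : Perm α) : (π * swap b c) k = π k := by
  rw [Perm.mul_apply, swap_apply_of_ne_of_ne (hk.trans_le hb).ne (hk.trans_le hc).ne]

theorem setIntegral_smul_count {α : Type*} [Fintype α] [MeasurableSpace α]
    [DiscreteMeasurableSpace α] (c : ℝ≥0∞) (F : α → ℝ) (s : Set α) :
    ∫ x in s, F x ∂(c • Measure.count) = c.toReal * ∑ x, s.indicator F x := by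
  rw [Measure.restrict_smul, integral_smul_measure, ← integral_indicator .of_discrete,
    integral_fintype .of_finite]
  simp

namespace SamplingWithoutReplacement

variable {n : ℕ} (d : Fin n → ℕ) (i : ℕ)

def firstDraws (j : ℕ) (π : Perm (Fin n)) : Fin n → ℕ :=
  fun k => if (k : ℕ) < j then d (π k) else 0

def drawnCount (j : ℕ) (π : Perm (Fin n)) : ℕ :=
  #{k : Fin n | (k : ℕ) < j ∧ d (π k) = i}

def remainingCount (j : ℕ) (π : Perm (Fin n)) : ℕ :=
  #{k : Fin n | j ≤ (k : ℕ) ∧ d (π k) = i}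

noncomputable def drawIndicator (π : Perm (Fin n)) (k : Fin n) : ℝ :=
  if d (π k) = i then 1 else 0

theorem sigmaUpTo_eq_comap_firstDraws (j : ℕ) :
    sigmaUpTo d j = MeasurableSpace.comap (firstDraws d j) ⊤ := by
  apply le_antisymm
  · refine iSup₂_le fun k hk => ?_
    have : (fun π : Perm (Fin n) => d (π k)) = (fun v => v k) ∘ firstDraws d j := by
      funext π; simp [firstDraws, hk]
    rw [this, ← MeasurableSpace.comap_comp]
    exact MeasurableSpace.comap_mono le_top
  · have htop : (⊤ : MeasurableSpace (Fin n → ℕ)) = MeasurableSpace.pi :=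
      (top_unique fun s (_ : MeasurableSet[⊤] s) => s.to_countable.measurableSet).symm
    let _ : MeasurableSpace (Perm (Fin n)) := sigmaUpTo d j
    rw [htop]
    refine Measurable.comap_le (measurable_pi_iff.2 fun k => ?_)
    by_cases hk : (k : ℕ) < j
    · simp only [firstDraws, hk, if_true]
      exact Measurable.of_comap_le (le_iSup₂_of_le k hk le_rfl)
    · simp only [firstDraws, hk, if_false]
      exact measurable_const

theorem firstDraws_mul_swap {a b c : Fin n} (hb : a ≤ b) (hc : a ≤ c) (π : Perm (Fin n)) :
    firstDraws d a (π * swap b c) = firstDraws d a π := by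
  funext k
  by_cases hk : k < a
  · simp [firstDraws, show (k : ℕ) < a from hk, mul_swap_apply_of_lt hb hc hk]
  · simp [firstDraws, show ¬ (k : ℕ) < a from hk]

theorem drawnCount_eq_card_firstDraws (j : ℕ) (π : Perm (Fin n)) :
    drawnCount d i j π = #{k : Fin n | (k : ℕ) < j ∧ firstDraws d j π k = i} := by
  unfold drawnCount firstDraws
  congr 1
  exact filter_congr fun k _ => by by_cases hk : (k : ℕ) < j <;> simp [hk]

theorem drawnCount_add_remainingCount (j : ℕ) (π : Perm (Fin n)) :
    drawnCount d i j π + remainingCount d i j π = #{k : Fin n | d k = i} := by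
  have hπ : #{k : Fin n | d (π k) = i} = #{k : Fin n | d k = i} :=
    card_bij (fun k _ => π k) (by simp) (fun _ _ _ _ h => π.injective h)
      (fun l hl => ⟨π.symm l, by simpa using hl, by simp⟩)
  rw [← hπ, ← card_filter_add_card_filter_not (s := {k : Fin n | d (π k) = i})
    (fun k : Fin n => (k : ℕ) < j), filter_filter, filter_filter, drawnCount, remainingCount]
  congr 2 <;> ext k <;> simp [and_comm, not_lt]

theorem drawnCount_mul_swap {a b c : Fin n} (hb : a ≤ b) (hc : a ≤ c) (π : Perm (Fin n)) :
    drawnCount d i a (π * swap b c) = drawnCount d i a π := by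
  rw [drawnCount_eq_card_firstDraws, drawnCount_eq_card_firstDraws, firstDraws_mul_swap d hb hc]

theorem remainingCount_mul_swap {a b c : Fin n} (hb : a ≤ b) (hc : a ≤ c) (π : Perm (Fin n)) :
    remainingCount d i a (π * swap b c) = remainingCount d i a π := by
  have h₁ := drawnCount_add_remainingCount d i a (π * swap b c)
  have h₂ := drawnCount_add_remainingCount d i a π
  rw [drawnCount_mul_swap d i hb hc] at h₁
  omega

theorem drawnCount_succ (a : Fin n) (π : Perm (Fin n)) :
    (drawnCount d i (a + 1) π : ℝ) = drawnCount d i a π + drawIndicator d i π a := by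
  have : univ.filter (fun k : Fin n => (k : ℕ) < a + 1 ∧ d (π k) = i)
      = univ.filter (fun k : Fin n => (k : ℕ) < a ∧ d (π k) = i)
        ∪ univ.filter (fun k : Fin n => k = a ∧ d (π k) = i) := by
    ext k; simp only [mem_filter, mem_union, mem_univ, true_and, Fin.ext_iff]; omega
  rw [drawnCount, drawnCount, this, card_union_of_disjoint]
  · unfold drawIndicator
    split_ifs with h
    · simpa [card_eq_one] using ⟨a, by ext k; constructor <;> simp_all⟩
    · simp_all
  · exact disjoint_filter.2 fun k _ hk hk' => hk.1.ne (congrArg Fin.val hk'.1)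

theorem remainingCount_eq_sum (a : Fin n) (π : Perm (Fin n)) :
    (remainingCount d i a π : ℝ) = ∑ k ∈ Ici a, drawIndicator d i π k := by
  simp only [remainingCount, drawIndicator, sum_boole]
  congr 2; ext k; simp only [mem_filter, mem_univ, true_and, mem_Ici, Fin.le_def]

theorem sum_mul_drawIndicator_eq (H : Perm (Fin n) → ℝ) (b c : Fin n)
    (hH : ∀ π, H (π * swap b c) = H π) :
    ∑ π, H π * drawIndicator d i π b = ∑ π, H π * drawIndicator d i π c := by
  rw [← Equiv.sum_comp (Equiv.mulRight (swap b c))]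
  simp [hH, drawIndicator]

theorem mul_sum_mul_drawIndicator (a : Fin n) (H : Perm (Fin n) → ℝ)
    (hH : ∀ π (b c : Fin n), a ≤ b → a ≤ c → H (π * swap b c) = H π) :
    ((n : ℝ) - a) * ∑ π, H π * drawIndicator d i π a
      = ∑ π, H π * remainingCount d i a π := by
  calc ((n : ℝ) - a) * ∑ π, H π * drawIndicator d i π a
      = ∑ k ∈ Ici a, ∑ π, H π * drawIndicator d i π k := by
        rw [sum_congr rfl fun k hk => sum_mul_drawIndicator_eq d i H k a
          (fun π => hH π k a (mem_Ici.1 hk) le_rfl), sum_const, Fin.card_Ici, nsmul_eq_mul,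
          Nat.cast_sub a.isLt.le]
    _ = ∑ π, H π * remainingCount d i a π := by
        rw [sum_comm]; simp_rw [remainingCount_eq_sum, mul_sum]

theorem sum_mul_sq_sub_mul_drawIndicator (a : Fin n) (H : Perm (Fin n) → ℝ)
    (hH : ∀ π (b c : Fin n), a ≤ b → a ≤ c → H (π * swap b c) = H π) :
    ∑ π, H π * ((remainingCount d i a π : ℝ) - ((n : ℝ) - a) * drawIndicator d i π a) ^ 2
      = ∑ π, H π * (remainingCount d i a π * ((n : ℝ) - a - remainingCount d i a π)) := by
  set m : ℝ := (n : ℝ) - a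
  set R : Perm (Fin n) → ℝ := fun π => remainingCount d i a π
  set X : Perm (Fin n) → ℝ := fun π => drawIndicator d i π a
  have hX : ∀ π, X π ^ 2 = X π := fun π => by
    simp only [X, drawIndicator]; split_ifs <;> norm_num
  have hH₁ : m * ∑ π, H π * X π = ∑ π, H π * R π := mul_sum_mul_drawIndicator d i a H hH
  have hHR : m * ∑ π, H π * R π * X π = ∑ π, H π * R π * R π :=
    mul_sum_mul_drawIndicator d i a (fun π => H π * R π) fun π b c hb hc => by
      simp only [R, hH π b c hb hc, remainingCount_mul_swap d i hb hc]
  calc ∑ π, H π * (R π - m * X π) ^ 2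
      = ∑ π, (H π * R π * R π - 2 * (m * (H π * R π * X π)) + m * (m * (H π * X π))) :=
        sum_congr rfl fun π _ => by linear_combination H π * m ^ 2 * hX π
    _ = ∑ π, H π * R π * R π - 2 * (m * ∑ π, H π * R π * X π)
          + m * (m * ∑ π, H π * X π) := by
        simp only [sum_add_distrib, sum_sub_distrib, mul_sum]
    _ = ∑ π, H π * (R π * (m - R π)) := by
        rw [hHR, hH₁]
        simp only [mul_sum, ← sum_sub_distrib, ← sum_add_distrib]
        exact sum_congr rfl fun π _ => by ring

theorem measurable_remainingCount (j : ℕ) :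
    Measurable[sigmaUpTo d j] (remainingCount d i j) := by
  have : remainingCount d i j = (fun v : Fin n → ℕ =>
      #{k : Fin n | d k = i} - #{k : Fin n | (k : ℕ) < j ∧ v k = i}) ∘ firstDraws d j := by
    funext π
    have := drawnCount_add_remainingCount d i j π
    rw [drawnCount_eq_card_firstDraws] at this
    simp only [Function.comp_apply]
    omega
  rw [this, sigmaUpTo_eq_comap_firstDraws]
  exact measurable_from_top.comp (comap_measurable _)

theorem condExp_sq_sub_mul_drawIndicator [MeasurableSpace (Perm (Fin n))]
    [DiscreteMeasurableSpace (Perm (Fin n))] {c : ℝ≥0∞} (hc : c ≠ ∞) (a : Fin n)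
    (C : ℝ) :
    (c • Measure.count)[fun π => ((remainingCount d i a π : ℝ)
        - ((n : ℝ) - a) * drawIndicator d i π a) ^ 2 / C | sigmaUpTo d a]
      =ᵐ[c • Measure.count]
        fun π => remainingCount d i a π * ((n : ℝ) - a - remainingCount d i a π) / C := by
  have := (Measure.count : Measure (Perm (Fin n))).smul_finite hc
  have hm : sigmaUpTo d a ≤ ‹MeasurableSpace (Perm (Fin n))› := fun _ _ => .of_discrete
  refine (ae_eq_condExp_of_forall_setIntegral_eq hm .of_finite
    (fun _ _ _ => Integrable.of_finite) (fun s hs _ => ?_) ?_).symm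
  · rw [sigmaUpTo_eq_comap_firstDraws] at hs
    obtain ⟨A, -, rfl⟩ := hs
    have hA : ∀ (F : Perm (Fin n) → ℝ) π,
        (firstDraws d a ⁻¹' A).indicator F π = A.indicator 1 (firstDraws d a π) * F π := by
      intro F π
      by_cases h : firstDraws d a π ∈ A <;> simp [h]
    simp only [setIntegral_smul_count, hA, mul_div_assoc', ← sum_div]
    rw [sum_mul_sq_sub_mul_drawIndicator d i a _ fun π b c hb hc => by
      rw [firstDraws_mul_swap d hb hc]]
  · exact (measurable_from_top (f := fun r : ℕ => (r : ℝ) * ((n : ℝ) - a - r) / C)).comp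
      (measurable_remainingCount d i a) |>.aestronglyMeasurable

noncomputable def deficitRatio (p : ℝ) (j : ℕ) (π : Perm (Fin n)) : ℝ :=
  ((j : ℝ) * p - drawnCount d i j π) / ((n : ℝ) - j)

theorem deficitRatio_succ_sub {p : ℝ} (hp : (n : ℝ) * p = #{k : Fin n | d k = i})
    (a : Fin n) (ha : (a : ℕ) + 1 < n) (π : Perm (Fin n)) :
    deficitRatio d i p (a + 1) π - deficitRatio d i p a π
      = ((remainingCount d i a π : ℝ) - ((n : ℝ) - a) * drawIndicator d i π a)
          / (((n : ℝ) - a) * ((n : ℝ) - a - 1)) := by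
  have hR : (remainingCount d i a π : ℝ) = #{k : Fin n | d k = i} - drawnCount d i a π := by
    rw [← drawnCount_add_remainingCount d i a π]; push_cast; ring
  have hm : (n : ℝ) - a ≠ 0 := sub_ne_zero.2 (by norm_cast; omega)
  have hm₁ : (n : ℝ) - a - 1 ≠ 0 := by
    rw [sub_sub]; exact sub_ne_zero.2 (by norm_cast; omega)
  simp only [deficitRatio, drawnCount_succ, hR, ← hp, Nat.cast_succ, sub_add_eq_sub_sub]
  field_simp
  ring

end SamplingWithoutReplacement

open SamplingWithoutReplacement

theorem stmt13_general {n : ℕ} (d : Fin n → ℕ) (i : ℕ)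
    [m0 : MeasurableSpace (Equiv.Perm (Fin n))] (hm0 : m0 = ⊤)
    (μ : Measure (Equiv.Perm (Fin n)))
    (hμ : μ = ((Nat.factorial n : ℝ≥0∞))⁻¹ • Measure.count)
    (p : ℝ) (hp : p = ((Finset.univ.filter (fun j : Fin n => d j = i)).card : ℝ) / n)
    (Q : ℕ → Equiv.Perm (Fin n) → ℕ)
    (hQ : ∀ s π, Q s π =
      (Finset.univ.filter (fun k : Fin n => (k : ℕ) < s ∧ d (π k) = i)).card)
    (Kt : ℕ → Equiv.Perm (Fin n) → ℝ)
    (hKt : ∀ j π, Kt j π = ((j : ℝ) * p - (Q j π : ℝ)) / ((n : ℝ) - j))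
    (j : ℕ) (hj : j + 2 ≤ n) :
    ∀ᵐ π ∂μ,
      (μ[fun π' => (Kt (j + 1) π' - Kt j π') ^ 2 | sigmaUpTo d j]) π
        ≤ 1 / (4 * ((n : ℝ) - (j + 1)) ^ 2) := by
  subst hμ
  have : DiscreteMeasurableSpace (Equiv.Perm (Fin n)) := by subst hm0; infer_instance
  obtain rfl : Q = drawnCount d i := funext₂ hQ
  obtain rfl : Kt = deficitRatio d i p := funext₂ hKt
  obtain ⟨a, rfl⟩ : ∃ a : Fin n, (a : ℕ) = j := ⟨⟨j, by omega⟩, rfl⟩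
  have hp' : (n : ℝ) * p = #{k : Fin n | d k = i} := by
    rw [hp, mul_div_cancel₀ _ (by norm_cast; omega)]
  have hsq : (fun π => (deficitRatio d i p (a + 1) π - deficitRatio d i p a π) ^ 2)
      = fun π => ((remainingCount d i a π : ℝ) - ((n : ℝ) - a) * drawIndicator d i π a) ^ 2
          / (((n : ℝ) - a) * ((n : ℝ) - a - 1)) ^ 2 :=
    funext fun π => by rw [deficitRatio_succ_sub d i hp' a (by omega), div_pow]
  filter_upwards [condExp_sq_sub_mul_drawIndicator d i (ENNReal.inv_ne_top.2 (by positivity))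
    a _] with π hπ
  rw [hsq, hπ, sub_add_eq_sub_sub]
  exact mul_sub_div_sq_le _ _

/-- Counting model for sampling without replacement: for `0 ≤ j ≤ n - 2`, a.s.
`var(K̃_{j+1} | F_j) = E[(K̃_{j+1} - K̃_j)² | F_j] ≤ 1/(4 (n - (j+1))²)`, where
`K̃_j = (j p - Q(j))/(n - j)`. -/
theorem stmt13 {n : ℕ} (hn : 1 ≤ n) (d : Fin n → ℕ) (i : ℕ)
    [m0 : MeasurableSpace (Equiv.Perm (Fin n))] (hm0 : m0 = ⊤)
    (μ : Measure (Equiv.Perm (Fin n)))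
    (hμ : μ = ((Nat.factorial n : ℝ≥0∞))⁻¹ • Measure.count)
    (p : ℝ) (hp : p = ((Finset.univ.filter (fun j : Fin n => d j = i)).card : ℝ) / n)
    (Q : ℕ → Equiv.Perm (Fin n) → ℕ)
    (hQ : ∀ s π, Q s π =
      (Finset.univ.filter (fun k : Fin n => (k : ℕ) < s ∧ d (π k) = i)).card)
    (Kt : ℕ → Equiv.Perm (Fin n) → ℝ)
    (hKt : ∀ j π, Kt j π = ((j : ℝ) * p - (Q j π : ℝ)) / ((n : ℝ) - j))
    (j : ℕ) (hj : j + 2 ≤ n) :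
    ∀ᵐ π ∂μ,
      (μ[fun π' => (Kt (j + 1) π' - Kt j π') ^ 2 | sigmaUpTo d j]) π
        ≤ 1 / (4 * ((n : ℝ) - (j + 1)) ^ 2) :=
  stmt13_general d i (m0 := m0) hm0 μ hμ p hp Q hQ Kt hKt j hj
end
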